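/- arXiv:math/0308140 — 2 statements merged into one kernel-verified Lean document; each statement's English description precedes it below -/
import Mathlib

section
/- Let α ∈ (0,1) be irrational and let ρ, ρ' ∈ [0,1). Then s_{α,ρ} < s_{α,ρ'} in the lexicographic order if and only if ρ < ρ'. -/
/-- Lower mechanical word of slope `α` and intercept `ρ`. -/
noncomputable def sLow (α ρ : ℝ) (n : ℕ) : ℤ := ⌊α * (n + 1) + ρ⌋ - ⌊α * n + ρ⌋

/-- Strict lexicographic order on infinite words. -/
def LexLt {A : Type*} [LT A] (x y : ℕ → A) : Prop :=
  ∃ m : ℕ, (∀ i, i < m → x i = y i) ∧ x m < y m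

private lemma lexLt_asymm {x y : ℕ → ℤ} (h : LexLt x y) : ¬ LexLt y x := by
  obtain ⟨m, h1, h2⟩ := h
  rintro ⟨m', h1', h2'⟩
  rcases lt_trichotomy m m' with hmm | hmm | hmm
  · exact absurd (h1' m hmm) (ne_of_gt h2)
  · subst hmm; exact absurd h2' (not_lt.2 h2.le)
  · exact absurd (h1 m' hmm) (ne_of_gt h2')

private lemma fract_ne_fract_of_irr {α : ℝ} (hα : Irrational α) {i j : ℕ} (hij : i ≠ j) :
    Int.fract (α * i) ≠ Int.fract (α * j) := by
  intro h
  obtain ⟨z, hz⟩ := Int.fract_eq_fract.1 h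
  have : α * ((i : ℝ) - j) = z := by ring_nf; linarith [hz]
  have hij' : (i : ℝ) - j ≠ 0 := by
    intro h0
    exact hij (Nat.cast_injective (by linarith : (i : ℝ) = j))
  have : α = z / ((i : ℝ) - j) := by field_simp at this ⊢; linarith [this]
  have : α = ((z : ℚ) / ((i : ℚ) - j) : ℚ) := by push_cast; exact this
  exact (this ▸ hα) ⟨_, rfl⟩

private lemma fract_pos_of_irr {α : ℝ} (hα : Irrational α) {k : ℕ} (hk : 1 ≤ k) :
    0 < Int.fract (α * k) := by
  rcases (Int.fract_nonneg (α * k)).lt_or_eq with h | h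
  · exact h
  · exfalso
    have : Int.fract (α * k) = 0 := h.symm
    rw [Int.fract_eq_iff] at this
    obtain ⟨-, -, z, hz⟩ := this
    have : α * k = z := by linarith
    exact (hα.natCast_mul (by omega : k ≠ 0)).ne_int z (by rw [mul_comm] at this; exact this)

/-- Pigeonhole: some positive multiple has fractional part close to 0 or 1. -/
private lemma exists_fract_near {α : ℝ} (hα : Irrational α) {ε : ℝ} (hε : 0 < ε) :
    ∃ k : ℕ, 1 ≤ k ∧ (Int.fract (α * k) < ε ∨ 1 - ε < Int.fract (α * k)) := by
  obtain ⟨N0, hN0⟩ := exists_nat_one_div_lt hε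
  set N : ℕ := N0 + 1 with hNdef
  have hN : 1 / (N : ℝ) < ε := by rw [hNdef]; push_cast; exact hN0
  have hNpos : (0 : ℝ) < N := by positivity
  -- pigeonhole on floors of N * fract
  have hmaps : ∀ i ∈ Finset.range (N + 1),
      (⌊(N : ℝ) * Int.fract (α * i)⌋.toNat) ∈ Finset.range N := by
    intro i _
    have h1 : (N : ℝ) * Int.fract (α * i) < N := by
      nlinarith [Int.fract_lt_one (α * i), Int.fract_nonneg (α * i)]
    have h2 : ⌊(N : ℝ) * Int.fract (α * i)⌋ < (N : ℤ) := by
      rw [Int.floor_lt]; exact_mod_cast h1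
    simp only [Finset.mem_range]
    omega
  obtain ⟨i, hi, j, hj, hij, hfij⟩ :=
    Finset.exists_ne_map_eq_of_card_lt_of_maps_to
      (by simp [Finset.card_range] : (Finset.range N).card < (Finset.range (N + 1)).card) hmaps
  -- WLOG i < j
  wlog hlt : i < j generalizing i j
  · exact this j hj i hi hij.symm hfij.symm (by omega)
  have hgeq : ⌊(N : ℝ) * Int.fract (α * i)⌋ = ⌊(N : ℝ) * Int.fract (α * j)⌋ := by
    have hnn1 : (0 : ℤ) ≤ ⌊(N : ℝ) * Int.fract (α * i)⌋ :=
      Int.floor_nonneg.2 (mul_nonneg hNpos.le (Int.fract_nonneg _))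
    have hnn2 : (0 : ℤ) ≤ ⌊(N : ℝ) * Int.fract (α * j)⌋ :=
      Int.floor_nonneg.2 (mul_nonneg hNpos.le (Int.fract_nonneg _))
    omega
  -- floors equal ⇒ values within 1/N
  have habs : |Int.fract (α * j) - Int.fract (α * i)| < 1 / N := by
    have h1 := Int.floor_le ((N : ℝ) * Int.fract (α * i))
    have h2 := Int.lt_floor_add_one ((N : ℝ) * Int.fract (α * i))
    have h3 := Int.floor_le ((N : ℝ) * Int.fract (α * j))
    have h4 := Int.lt_floor_add_one ((N : ℝ) * Int.fract (α * j))
    rw [hgeq] at h1 h2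
    rw [abs_lt]
    constructor
    · rw [neg_lt, show -(Int.fract (α * ↑j) - Int.fract (α * ↑i)) =
        Int.fract (α * ↑i) - Int.fract (α * ↑j) by ring, lt_div_iff₀ hNpos]
      nlinarith
    · rw [lt_div_iff₀ hNpos]
      nlinarith
  set u : ℝ := Int.fract (α * j) - Int.fract (α * i) with hu
  have hune : u ≠ 0 := sub_ne_zero.2 (fract_ne_fract_of_irr hα (by omega))
  refine ⟨j - i, by omega, ?_⟩
  have hcast : α * ((j - i : ℕ) : ℝ) = α * j - α * i := by
    push_cast [Nat.cast_sub hlt.le]; ring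
  have hfr : Int.fract (α * ((j - i : ℕ) : ℝ)) = Int.fract u := by
    rw [hcast]
    apply Int.fract_eq_fract.2
    exact ⟨⌊α * j⌋ - ⌊α * i⌋, by
      simp only [hu, Int.fract]
      push_cast
      ring⟩
  have hN1 : 1 / (N : ℝ) ≤ 1 := by
    rw [div_le_one hNpos]
    exact_mod_cast Nat.one_le_iff_ne_zero.2 (by omega)
  rcases hune.lt_or_gt with hneg | hpos
  · right
    have h1 : (-1 : ℝ) < u := by
      have := abs_lt.1 habs
      linarith
    have : Int.fract u = u + 1 := by
      rw [Int.fract_eq_iff]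
      exact ⟨by linarith, by linarith, ⟨-1, by push_cast; ring⟩⟩
    rw [hfr, this]
    have := (abs_lt.1 habs).1
    linarith
  · left
    have : Int.fract u = u := Int.fract_eq_self.2 ⟨hpos.le, by
      have := Int.fract_lt_one (α * j); have := Int.fract_nonneg (α * i); simp only [hu]; linarith⟩
    rw [hfr, this]
    have := (abs_lt.1 habs).2
    linarith

/-- Density: the fractional parts of natural multiples of an irrational hit every
subinterval `[a, b)` of `(0, 1]`. -/
private lemma exists_fract_mem {α : ℝ} (hα : Irrational α) {a b : ℝ}
    (ha : 0 < a) (hab : a < b) (hb : b ≤ 1) :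
    ∃ n : ℕ, 1 ≤ n ∧ a ≤ Int.fract (α * n) ∧ Int.fract (α * n) < b := by
  obtain ⟨k, hk, hkcase⟩ := exists_fract_near hα (show (0:ℝ) < b - a by linarith)
  set δ : ℝ := Int.fract (α * k) with hδ
  have hδpos : 0 < δ := fract_pos_of_irr hα hk
  have hδlt1 : δ < 1 := Int.fract_lt_one _
  have key : ∀ (j : ℕ) (x : ℝ), Int.fract ((j : ℝ) * δ) = x → 1 ≤ j →
      a ≤ x → x < b → ∃ n : ℕ, 1 ≤ n ∧ a ≤ Int.fract (α * n) ∧ Int.fract (α * n) < b := by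
    intro j x hx hj hax hxb
    refine ⟨j * k, Nat.one_le_iff_ne_zero.2 (by positivity), ?_⟩
    have : Int.fract (α * ((j * k : ℕ) : ℝ)) = Int.fract ((j : ℝ) * δ) := by
      apply Int.fract_eq_fract.2
      refine ⟨j * ⌊α * k⌋, ?_⟩
      simp only [hδ, Int.fract]
      push_cast
      ring
    rw [this, hx]; exact ⟨hax, hxb⟩
  rcases hkcase with hsmall | hbig
  · -- δ < b - a : take j = ⌈a/δ⌉
    set j : ℕ := ⌈a / δ⌉₊ with hj
    have hj1 : 1 ≤ j := Nat.one_le_iff_ne_zero.2 (by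
      simp only [hj, ne_eq, Nat.ceil_eq_zero, not_le]
      positivity)
    have h1 : a ≤ (j : ℝ) * δ := by
      have := Nat.le_ceil (a / δ)
      calc a = (a / δ) * δ := by field_simp
        _ ≤ (j : ℝ) * δ := by apply mul_le_mul_of_nonneg_right this hδpos.le
    have h2 : (j : ℝ) * δ < b := by
      have := Nat.ceil_lt_add_one (by positivity : (0:ℝ) ≤ a / δ)
      have : (j : ℝ) * δ < (a / δ + 1) * δ := by
        apply mul_lt_mul_of_pos_right this hδpos
      calc (j : ℝ) * δ < (a / δ + 1) * δ := this
        _ = a + δ := by field_simp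
        _ < b := by linarith
    refine key j ((j : ℝ) * δ) (Int.fract_eq_self.2 ⟨by linarith, by linarith⟩) hj1 h1 h2
  · -- 1 - (b - a) < δ : going backwards with step η = 1 - δ
    set η : ℝ := 1 - δ with hη
    have hηpos : 0 < η := by simp only [hη]; linarith
    have hηlt : η < b - a := by simp only [hη]; linarith
    set j : ℕ := ⌊(1 - b) / η⌋₊ + 1 with hj
    have h1b : (0:ℝ) ≤ 1 - b := by linarith
    have h1 : 1 - b < (j : ℝ) * η := by
      have := Nat.lt_floor_add_one ((1 - b) / η)
      have h2 : (1 - b) / η * η < (j : ℝ) * η := by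
        apply mul_lt_mul_of_pos_right _ hηpos
        push_cast [hj]; exact this
      calc 1 - b = (1 - b) / η * η := by field_simp
        _ < (j : ℝ) * η := h2
    have h2 : (j : ℝ) * η < 1 - a := by
      have hfl := Nat.floor_le (by positivity : (0:ℝ) ≤ (1 - b) / η)
      have : (j : ℝ) * η ≤ ((1 - b) / η + 1) * η := by
        apply mul_le_mul_of_nonneg_right _ hηpos.le
        push_cast [hj]; linarith
      calc (j : ℝ) * η ≤ ((1 - b) / η + 1) * η := this
        _ = (1 - b) + η := by field_simp
        _ < 1 - a := by linarith
    have hjη0 : 0 < (j : ℝ) * η := by positivity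
    have hfr : Int.fract ((j : ℝ) * δ) = 1 - (j : ℝ) * η := by
      have : Int.fract ((j : ℝ) * δ) = Int.fract (1 - (j : ℝ) * η) := by
        apply Int.fract_eq_fract.2
        exact ⟨(j : ℤ) - 1, by push_cast; simp only [hη]; ring⟩
      rw [this, Int.fract_eq_self.2 ⟨by linarith, by linarith⟩]
    exact key j (1 - (j : ℝ) * η) hfr (by omega) (by linarith) (by linarith)

private lemma floor_lt_floor_of_fract {α ρ ρ' : ℝ} (hρ0 : 0 ≤ ρ) (hρ'1 : ρ' < 1)
    {n : ℕ} (h1 : 1 - ρ' ≤ Int.fract (α * n)) (h2 : Int.fract (α * n) < 1 - ρ) :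
    ⌊α * n + ρ⌋ < ⌊α * n + ρ'⌋ := by
  have e : α * n = (⌊α * n⌋ : ℝ) + Int.fract (α * n) := (Int.floor_add_fract _).symm
  have hlow : ⌊α * n + ρ⌋ < ⌊α * n⌋ + 1 := by
    rw [Int.floor_lt]; push_cast; linarith
  have hhigh : ⌊α * n⌋ + 1 ≤ ⌊α * n + ρ'⌋ := by
    rw [Int.le_floor]; push_cast; linarith
  omega

private lemma lexLt_of_lt (α : ℝ) (hα : Irrational α) (hα0 : 0 < α) (hα1 : α < 1)
    (ρ ρ' : ℝ) (hρ : ρ ∈ Set.Ico (0 : ℝ) 1) (hρ' : ρ' ∈ Set.Ico (0 : ℝ) 1)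
    (hlt : ρ < ρ') : LexLt (sLow α ρ) (sLow α ρ') := by
  classical
  obtain ⟨hρ0, hρ1⟩ := hρ
  obtain ⟨hρ'0, hρ'1⟩ := hρ'
  -- there is n with a strictly bigger floor for ρ'
  have hex : ∃ n : ℕ, ⌊α * n + ρ⌋ < ⌊α * n + ρ'⌋ := by
    obtain ⟨n, _, h1, h2⟩ := exists_fract_mem hα
      (show (0:ℝ) < 1 - ρ' by linarith) (show 1 - ρ' < 1 - ρ by linarith)
      (show 1 - ρ ≤ 1 by linarith)
    exact ⟨n, floor_lt_floor_of_fract hρ0 hρ'1 h1 h2⟩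
  -- floors are monotone and within 1
  have hmono : ∀ n : ℕ, ⌊α * n + ρ⌋ ≤ ⌊α * n + ρ'⌋ ∧ ⌊α * n + ρ'⌋ ≤ ⌊α * n + ρ⌋ + 1 := by
    intro n
    constructor
    · exact Int.floor_le_floor (by linarith)
    · have h : α * n + ρ' ≤ α * n + ρ + 1 := by linarith
      have h2 : ⌊α * n + ρ'⌋ ≤ ⌊α * n + ρ + 1⌋ := Int.floor_le_floor h
      rwa [Int.floor_add_one] at h2
  set m : ℕ := Nat.find hex with hm
  have hmspec : ⌊α * m + ρ⌋ < ⌊α * m + ρ'⌋ := Nat.find_spec hex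
  have hmmin : ∀ i, i < m → ⌊α * i + ρ⌋ = ⌊α * i + ρ'⌋ := by
    intro i hi
    have := Nat.find_min hex hi
    have := (hmono i).1
    omega
  have hm1 : 1 ≤ m := by
    rcases Nat.eq_zero_or_pos m with h0 | h; swap; · exact h
    exfalso
    rw [h0] at hmspec
    simp only [Nat.cast_zero, mul_zero, zero_add] at hmspec
    rw [Int.floor_eq_zero_iff.2 ⟨hρ0, hρ1⟩, Int.floor_eq_zero_iff.2 ⟨hρ'0, hρ'1⟩] at hmspec
    exact lt_irrefl 0 hmspec
  clear hm
  clear_value m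
  obtain ⟨p, rfl⟩ : ∃ p, m = p + 1 := ⟨m - 1, by omega⟩
  refine ⟨p, ?_, ?_⟩
  · intro i hi
    have e1 := hmmin i (by omega)
    have e2 := hmmin (i + 1) (by omega)
    simp only [sLow]
    push_cast at e2 ⊢
    rw [e1]
    rw [show α * ((i:ℝ) + 1) + ρ = α * ((i:ℕ) + 1 : ℕ) + ρ by push_cast; ring,
        show α * ((i:ℝ) + 1) + ρ' = α * ((i:ℕ) + 1 : ℕ) + ρ' by push_cast; ring] at *
    rw [e2]
  · have e1 := hmmin p (by omega)
    simp only [sLow]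
    have ecast : ((p:ℝ) + 1) = ((p + 1 : ℕ) : ℝ) := by push_cast; ring
    rw [ecast, e1]
    omega

theorem stmt2 (α : ℝ) (hα : Irrational α) (hα0 : 0 < α) (hα1 : α < 1)
    (ρ ρ' : ℝ) (hρ : ρ ∈ Set.Ico (0 : ℝ) 1) (hρ' : ρ' ∈ Set.Ico (0 : ℝ) 1) :
    LexLt (sLow α ρ) (sLow α ρ') ↔ ρ < ρ' := by
  constructor
  · intro h
    rcases lt_trichotomy ρ ρ' with hlt | heq | hgt
    · exact hlt
    · exfalso; subst heq; exact lexLt_asymm h h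
    · exact absurd h (lexLt_asymm (lexLt_of_lt α hα hα0 hα1 ρ' ρ hρ' hρ hgt))
  · exact lexLt_of_lt α hα hα0 hα1 ρ ρ' hρ hρ'
end

section
/- Let β > 1 and suppose d_β(1) is Sturmian over {a,b} with slope α, where 0 ≤ a < b = ⌊β⌋ are integers and α ∈ (0,1) is irrational. Then: (i) d_β(1) is not eventually periodic; (ii) 0 is not an accumulation point of the sequence (T_β^n(1))_{n≥0}; (iii) sup{|x − y| : x, y ∈ {T_β^n(1) : n ≥ 0}} = (b − a)/β. Moreover, a = b − 1 if and only if 1 − 1/β ≤ T_β^n(1) ≤ 1 for all n ≥ 0. -/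
/-- The β-transformation `x ↦ βx mod 1`. -/
noncomputable def Tb (β x : ℝ) : ℝ := β * x - ⌊β * x⌋

/-- The β-expansion of 1 : `ε_n = ⌊β ⬝ T_β^n(1)⌋`. -/
noncomputable def dB1 (β : ℝ) (n : ℕ) : ℤ := ⌊β * (Tb β)^[n] 1⌋

/-- A sequence is eventually periodic. -/
def EventuallyPeriodic {A : Type*} (x : ℕ → A) : Prop :=
  ∃ m p : ℕ, 0 < p ∧ ∀ n, m ≤ n → x (n + p) = x n

open Filter

lemma sg_dense {α : ℝ} (hα : Irrational α) :
    Dense ((AddSubgroup.zmultiples α ⊔ AddSubgroup.zmultiples (1:ℝ) : AddSubgroup ℝ) : Set ℝ) := by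
  rcases (AddSubgroup.zmultiples α ⊔ AddSubgroup.zmultiples (1:ℝ)).dense_or_cyclic with h | ⟨g, hg⟩
  · exact h
  · exfalso
    have hαmem : α ∈ AddSubgroup.closure ({g} : Set ℝ) := by
      rw [← hg]
      exact SetLike.le_def.mp le_sup_left (AddSubgroup.mem_zmultiples α)
    have h1mem : (1:ℝ) ∈ AddSubgroup.closure ({g} : Set ℝ) := by
      rw [← hg]
      exact SetLike.le_def.mp le_sup_right (AddSubgroup.mem_zmultiples 1)
    rw [AddSubgroup.mem_closure_singleton] at hαmem h1mem
    obtain ⟨k, hk⟩ := hαmem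
    obtain ⟨l, hl⟩ := h1mem
    rw [zsmul_eq_mul] at hk hl
    have hl0 : (l : ℝ) ≠ 0 := by
      intro h; rw [h, zero_mul] at hl; exact one_ne_zero hl.symm
    refine hα ⟨(k : ℚ) / (l : ℚ), ?_⟩
    push_cast
    rw [div_eq_iff hl0, ← hk]
    linear_combination (-(k:ℝ)) * hl

lemma irr_nat_mul {α : ℝ} (hα : Irrational α) {n : ℕ} (hn : n ≠ 0) :
    Irrational (α * n) := by
  rw [mul_comm]; exact hα.natCast_mul hn

lemma irr_fract {y : ℝ} (hy : Irrational y) : Irrational (Int.fract y) := by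
  unfold Int.fract
  exact hy.sub_intCast ⌊y⌋

lemma fract_pos_of_irr_s10 {y : ℝ} (hy : Irrational y) : 0 < Int.fract y := by
  rcases lt_or_eq_of_le (Int.fract_nonneg y) with h | h
  · exact h
  · exact absurd h.symm (by simpa using (irr_fract hy).ne_int 0)

lemma exists_small {α : ℝ} (hα : Irrational α) {ε : ℝ} (hε : 0 < ε) (hε1 : ε ≤ 1) :
    ∃ n : ℕ, 1 ≤ n ∧ (Int.fract (α * n) < ε ∨ 1 - ε < Int.fract (α * n)) := by
  obtain ⟨s, hsmem, hs⟩ := (sg_dense hα).exists_between hε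
  obtain ⟨y, hy, z, hz, rfl⟩ := AddSubgroup.mem_sup.mp hsmem
  obtain ⟨k, rfl⟩ := AddSubgroup.mem_zmultiples_iff.mp hy
  obtain ⟨l, rfl⟩ := AddSubgroup.mem_zmultiples_iff.mp hz
  rw [zsmul_eq_mul, zsmul_eq_mul, mul_one] at hs
  obtain ⟨hs0, hsε⟩ := hs
  have hslt1 : (k:ℝ) * α + l < 1 := lt_of_lt_of_le hsε hε1
  have hk0 : k ≠ 0 := by
    rintro rfl
    simp only [Int.cast_zero, zero_mul, zero_add] at hs0 hslt1
    have : (0:ℤ) < l := by exact_mod_cast hs0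
    have : (1:ℤ) ≤ l := this
    have : (1:ℝ) ≤ l := by exact_mod_cast this
    linarith
  have hfr : Int.fract ((k:ℝ) * α + l) = (k:ℝ) * α + l :=
    Int.fract_eq_self.mpr ⟨le_of_lt hs0, hslt1⟩
  rcases lt_or_gt_of_ne hk0 with hkneg | hkpos
  · refine ⟨(-k).toNat, ?_, ?_⟩
    · have : 0 < -k := by omega
      omega
    · right
      have hcast : (((-k).toNat : ℕ) : ℝ) = -(k:ℝ) := by
        have : ((-k).toNat : ℤ) = -k := Int.toNat_of_nonneg (by omega)
        exact_mod_cast this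
      rw [hcast]
      have : α * (-(k:ℝ)) = -((k:ℝ) * α + l) + l := by ring
      rw [this, Int.fract_add_intCast, Int.fract_neg (by rw [hfr]; exact ne_of_gt hs0), hfr]
      linarith
  · refine ⟨k.toNat, by omega, ?_⟩
    left
    have hcast : ((k.toNat : ℕ) : ℝ) = (k:ℝ) := by
      have : (k.toNat : ℤ) = k := Int.toNat_of_nonneg (by omega)
      exact_mod_cast this
    rw [hcast]
    have : α * (k:ℝ) = ((k:ℝ) * α + l) + (-l) := by ring
    rw [this, show (-(l:ℝ)) = ((-l : ℤ) : ℝ) by push_cast; ring, Int.fract_add_intCast, hfr]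
    exact hsε

lemma step_hit {t δ : ℝ} (hδ : 0 < δ) (ht : 0 ≤ t) :
    ∃ j : ℕ, 1 ≤ j ∧ t < (j:ℝ) * δ ∧ (j:ℝ) * δ ≤ t + δ ∧ t / δ < (j:ℝ) := by
  refine ⟨⌊t/δ⌋.toNat + 1, by omega, ?_, ?_, ?_⟩
  · have h1 : ((⌊t/δ⌋.toNat + 1 : ℕ) : ℝ) = (⌊t/δ⌋ : ℝ) + 1 := by
      have : (⌊t/δ⌋.toNat : ℤ) = ⌊t/δ⌋ := Int.toNat_of_nonneg (Int.floor_nonneg.mpr (by positivity))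
      exact_mod_cast congrArg (fun z : ℤ => (z:ℝ) + 1) this
    rw [h1]
    have := Int.lt_floor_add_one (t/δ)
    calc t = (t/δ) * δ := by field_simp
    _ < ((⌊t/δ⌋ : ℝ) + 1) * δ := by exact mul_lt_mul_of_pos_right this hδ
  · have h1 : ((⌊t/δ⌋.toNat + 1 : ℕ) : ℝ) = (⌊t/δ⌋ : ℝ) + 1 := by
      have : (⌊t/δ⌋.toNat : ℤ) = ⌊t/δ⌋ := Int.toNat_of_nonneg (Int.floor_nonneg.mpr (by positivity))
      exact_mod_cast congrArg (fun z : ℤ => (z:ℝ) + 1) this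
    rw [h1]
    have := Int.floor_le (t/δ)
    have h2 : (⌊t/δ⌋ : ℝ) * δ ≤ (t/δ) * δ := mul_le_mul_of_nonneg_right this hδ.le
    have h3 : (t/δ) * δ = t := by field_simp
    nlinarith
  · have h1 : ((⌊t/δ⌋.toNat + 1 : ℕ) : ℝ) = (⌊t/δ⌋ : ℝ) + 1 := by
      have : (⌊t/δ⌋.toNat : ℤ) = ⌊t/δ⌋ := Int.toNat_of_nonneg (Int.floor_nonneg.mpr (by positivity))
      exact_mod_cast congrArg (fun z : ℤ => (z:ℝ) + 1) this
    rw [h1]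
    exact Int.lt_floor_add_one (t/δ)

lemma dens {α : ℝ} (hα : Irrational α) {c d : ℝ} (hc : 0 ≤ c) (hcd : c < d) (hd : d ≤ 1)
    (m : ℕ) : ∃ n : ℕ, m ≤ n ∧ 1 ≤ n ∧ c < Int.fract (α * n) ∧ Int.fract (α * n) < d := by
  set w : ℝ := d - c with hw
  clear_value w
  have hw0 : 0 < w := by simp [hw]; linarith
  set c2 : ℝ := c + w/3 with hc2
  clear_value c2
  set d2 : ℝ := d - w/3 with hd2
  clear_value d2
  have hc20 : 0 < c2 := by simp [hc2]; nlinarith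
  have hd21 : d2 < 1 := by simp [hd2]; nlinarith
  have hc2d2 : c2 < d2 := by simp [hc2, hd2]; nlinarith
  set M : ℕ := max m 1 with hM
  have hM0 : (0:ℝ) < M := by
    have : 1 ≤ M := le_max_right m 1
    exact_mod_cast Nat.lt_of_lt_of_le Nat.zero_lt_one this
  set ε : ℝ := min (w/3) (min (c2/M) ((1-d2)/M)) with hε
  have hε0 : 0 < ε := by
    apply lt_min (by linarith)
    exact lt_min (div_pos hc20 hM0) (div_pos (by linarith) hM0)
  have hεw : ε ≤ w/3 := min_le_left _ _
  have hεc : ε ≤ c2/M := le_trans (min_le_right _ _) (min_le_left _ _)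
  have hεd : ε ≤ (1-d2)/M := le_trans (min_le_right _ _) (min_le_right _ _)
  clear_value ε
  have hε1 : ε ≤ 1 := by
    have : w ≤ 1 := by simp [hw]; linarith
    linarith
  obtain ⟨n₀, hn₀1, hcase⟩ := exists_small hα hε0 hε1
  have hirr : Irrational (α * n₀) := irr_nat_mul hα (by omega)
  have hfd : (⌊α * (n₀:ℝ)⌋ : ℝ) + Int.fract (α * n₀) = α * n₀ := by
    rw [add_comm]; exact Int.fract_add_floor (α * n₀)
  -- common finisher
  rcases hcase with hA | hB
  · -- small fractional part
    set δ : ℝ := Int.fract (α * n₀) with hδdef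
    have hδ0 : 0 < δ := fract_pos_of_irr_s10 hirr
    have hδfr : (⌊α * (n₀:ℝ)⌋ : ℝ) + δ = α * n₀ := hfd
    clear_value δ
    obtain ⟨j, hj1, hjl, hju, hjdiv⟩ := step_hit hδ0 hc20.le
    have hjd2 : (j:ℝ) * δ < d2 := by
      have : c2 + δ < c2 + ε := by linarith
      calc (j:ℝ) * δ ≤ c2 + δ := hju
      _ < c2 + ε := this
      _ ≤ c2 + w/3 := by linarith
      _ = d2 := by rw [hc2, hd2, hw]; ring
    refine ⟨j * n₀, ?_, Nat.one_le_iff_ne_zero.mpr (Nat.mul_ne_zero (by omega) (by omega)), ?_, ?_⟩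
    · have hMle : (M:ℝ) ≤ c2/ε := by
        rw [le_div_iff₀ hε0]
        calc (M:ℝ) * ε ≤ (M:ℝ) * (c2/M) := by
              exact mul_le_mul_of_nonneg_left hεc hM0.le
        _ = c2 := by field_simp
      have : (m:ℝ) ≤ M := by exact_mod_cast le_max_left m 1
      have hcc : c2/ε ≤ c2/δ := div_le_div_of_nonneg_left hc20.le hδ0 hA.le
      have : (m:ℝ) < j := by linarith
      have hmj : m < j := by exact_mod_cast this
      calc m ≤ j := hmj.le
      _ ≤ j * n₀ := Nat.le_mul_of_pos_right j (by omega)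
    all_goals {
      have hkey : α * ((j * n₀ : ℕ):ℝ) = ((j * ⌊α * (n₀:ℝ)⌋ : ℤ) : ℝ) + (j:ℝ) * δ := by
        push_cast
        linear_combination (j:ℝ) * hδfr.symm
      rw [hkey, Int.fract_intCast_add, Int.fract_eq_self.mpr ⟨by positivity, by linarith⟩]
      linarith
    }
  · -- large fractional part
    set δ : ℝ := 1 - Int.fract (α * n₀) with hδdef
    have hδ0 : 0 < δ := by
      have := Int.fract_lt_one (α * n₀)
      simp only [hδdef]; linarith
    have hδε : δ < ε := by simp only [hδdef]; linarith
    have hδfr : (⌊α * (n₀:ℝ)⌋ : ℝ) + (1 - δ) = α * n₀ := by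
      simp only [hδdef]; linarith [hfd]
    clear_value δ
    obtain ⟨j, hj1, hjl, hju, hjdiv⟩ := step_hit hδ0 (by linarith : (0:ℝ) ≤ 1 - d2)
    have hjc2 : (j:ℝ) * δ < 1 - c2 := by
      calc (j:ℝ) * δ ≤ (1 - d2) + δ := hju
      _ < (1 - d2) + ε := by linarith
      _ ≤ (1 - d2) + w/3 := by linarith
      _ = 1 - c2 := by rw [hc2, hd2, hw]; ring
    have hjpos : 0 < (j:ℝ) * δ := by positivity
    refine ⟨j * n₀, ?_, Nat.one_le_iff_ne_zero.mpr (Nat.mul_ne_zero (by omega) (by omega)), ?_, ?_⟩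
    · have hMle : (M:ℝ) ≤ (1-d2)/ε := by
        rw [le_div_iff₀ hε0]
        calc (M:ℝ) * ε ≤ (M:ℝ) * ((1-d2)/M) := by
              exact mul_le_mul_of_nonneg_left hεd hM0.le
        _ = 1 - d2 := by field_simp
      have : (m:ℝ) ≤ M := by exact_mod_cast le_max_left m 1
      have hcc : (1-d2)/ε ≤ (1-d2)/δ := div_le_div_of_nonneg_left (by linarith) hδ0 hδε.le
      have : (m:ℝ) < j := by linarith
      have hmj : m < j := by exact_mod_cast this
      calc m ≤ j := hmj.le
      _ ≤ j * n₀ := Nat.le_mul_of_pos_right j (by omega)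
    all_goals {
      have hkey : α * ((j * n₀ : ℕ):ℝ) = ((j * ⌊α * (n₀:ℝ)⌋ + j : ℤ) : ℝ) + (-((j:ℝ) * δ)) := by
        push_cast
        linear_combination (j:ℝ) * hδfr.symm
      have hfrne : Int.fract ((j:ℝ) * δ) ≠ 0 := by
        rw [Int.fract_eq_self.mpr ⟨hjpos.le, by linarith⟩]
        exact ne_of_gt hjpos
      rw [hkey, Int.fract_intCast_add, Int.fract_neg hfrne,
        Int.fract_eq_self.mpr ⟨hjpos.le, by linarith⟩]
      linarith
    }

lemma ceil_irr_floor {y : ℝ} (hy : Irrational y) : ⌈y⌉ = ⌊y⌋ + 1 := by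
  apply le_antisymm
  · exact Int.ceil_le.mpr (by exact_mod_cast (Int.lt_floor_add_one y).le)
  · rw [Int.add_one_le_iff]
    have h1 : (⌊y⌋ : ℝ) < y := lt_of_le_of_ne (Int.floor_le y) (by simpa using (hy.ne_int ⌊y⌋).symm)
    have h2 : y ≤ (⌈y⌉ : ℝ) := Int.le_ceil y
    exact_mod_cast lt_of_lt_of_le h1 h2

lemma ceil_add_of_fract_lt {u v : ℝ} (hu : Irrational u) (hv : Irrational v)
    (huv : Irrational (u + v)) (h : Int.fract u + Int.fract v < 1) :
    ⌈u + v⌉ = ⌈u⌉ + ⌈v⌉ - 1 := by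
  have hfl : ⌊u + v⌋ = ⌊u⌋ + ⌊v⌋ := by
    rw [Int.floor_eq_iff]
    constructor
    · push_cast
      nlinarith [Int.fract_nonneg u, Int.fract_nonneg v, Int.floor_add_fract u,
        Int.floor_add_fract v]
    · push_cast
      nlinarith [Int.floor_add_fract u, Int.floor_add_fract v]
  rw [ceil_irr_floor huv, ceil_irr_floor hu, ceil_irr_floor hv, hfl]
  ring

lemma ceil_add_of_one_lt_fract {u v : ℝ} (hu : Irrational u) (hv : Irrational v)
    (huv : Irrational (u + v)) (h : 1 < Int.fract u + Int.fract v) :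
    ⌈u + v⌉ = ⌈u⌉ + ⌈v⌉ := by
  have hfl : ⌊u + v⌋ = ⌊u⌋ + ⌊v⌋ + 1 := by
    rw [Int.floor_eq_iff]
    constructor
    · push_cast
      nlinarith [Int.floor_add_fract u, Int.floor_add_fract v]
    · push_cast
      nlinarith [Int.fract_lt_one u, Int.fract_lt_one v, Int.floor_add_fract u,
        Int.floor_add_fract v]
  rw [ceil_irr_floor huv, ceil_irr_floor hu, ceil_irr_floor hv, hfl]
  ring

lemma Tb_eq_fract (β x : ℝ) : Tb β x = Int.fract (β * x) := rfl

lemma xmem (β : ℝ) (n : ℕ) : 0 ≤ (Tb β)^[n] 1 ∧ (Tb β)^[n] 1 ≤ 1 := by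
  cases n with
  | zero => norm_num
  | succ n =>
    rw [Function.iterate_succ_apply', Tb_eq_fract]
    exact ⟨Int.fract_nonneg _, (Int.fract_lt_one _).le⟩

lemma x_rec (β : ℝ) (n : ℕ) : (Tb β)^[n+1] 1 = β * (Tb β)^[n] 1 - dB1 β n := by
  rw [Function.iterate_succ_apply']; rfl

lemma sum_id {β : ℝ} (hβ0 : β ≠ 0) (n K : ℕ) :
    (Tb β)^[n] 1 = (∑ k ∈ Finset.range K, (dB1 β (n+k) : ℝ) * β⁻¹^(k+1))
      + (Tb β)^[n+K] 1 * β⁻¹^K := by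
  induction K with
  | zero => simp
  | succ K ih =>
    have hrec := x_rec β (n+K)
    have hx : (Tb β)^[n+K] 1 = β⁻¹ * ((dB1 β (n+K) : ℝ) + (Tb β)^[n+(K+1)] 1) := by
      have h2 : (Tb β)^[n+(K+1)] 1 = β * (Tb β)^[n+K] 1 - dB1 β (n+K) := hrec
      rw [h2]
      field_simp
      ring
    rw [Finset.sum_range_succ]
    calc (Tb β)^[n] 1
        = (∑ k ∈ Finset.range K, (dB1 β (n+k) : ℝ) * β⁻¹^(k+1)) + (Tb β)^[n+K] 1 * β⁻¹^K := ih
      _ = _ := by rw [hx]; ring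

lemma geom_bound {v : ℝ} (hv0 : 0 ≤ v) (hv1 : v ≤ 1) :
    ∀ (K : ℕ) (c : ℕ → ℝ) (L U : ℝ),
      (∀ j, j ≤ K → L ≤ ∑ k ∈ Finset.range j, c k ∧ ∑ k ∈ Finset.range j, c k ≤ U) →
      L * v ≤ (∑ k ∈ Finset.range K, c k * v^(k+1)) ∧
        (∑ k ∈ Finset.range K, c k * v^(k+1)) ≤ U * v := by
  intro K
  induction K with
  | zero =>
    intro c L U h
    have h0 := h 0 (le_refl 0)
    simp only [Finset.range_zero, Finset.sum_empty] at h0 ⊢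
    constructor
    · nlinarith [h0.1, h0.2]
    · nlinarith [h0.1, h0.2]
  | succ K ih =>
    intro c L U h
    have hc0 := h 1 (by omega)
    rw [Finset.sum_range_one] at hc0
    have ih' := ih (fun k => c (k+1)) (L - c 0) (U - c 0) ?_
    · have expand : ∑ k ∈ Finset.range (K+1), c k * v^(k+1)
          = (∑ k ∈ Finset.range K, (c (k+1)) * v^(k+1)) * v + c 0 * v := by
        rw [Finset.sum_range_succ', Finset.sum_mul]
        congr 1
        · exact Finset.sum_congr rfl (fun k _ => by ring)
        · ring
      rw [expand]
      obtain ⟨l', u'⟩ := ih'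
      constructor
      · nlinarith [mul_nonneg (mul_nonneg (sub_nonneg.mpr hc0.1) hv0) (sub_nonneg.mpr hv1),
          mul_le_mul_of_nonneg_right l' hv0]
      · nlinarith [mul_nonneg (mul_nonneg (sub_nonneg.mpr hc0.2) hv0) (sub_nonneg.mpr hv1),
          mul_le_mul_of_nonneg_right u' hv0]
    · intro j hj
      have hsum := h (j+1) (by omega)
      rw [Finset.sum_range_succ'] at hsum
      constructor
      · linarith [hsum.1]
      · linarith [hsum.2]

noncomputable def Eseq (α : ℝ) (n : ℕ) : ℤ := ⌈α * n⌉

noncomputable def chi (α : ℝ) (n : ℕ) : ℤ := Eseq α (n+1) - Eseq α n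

lemma Eseq_zero (α : ℝ) : Eseq α 0 = 0 := by simp [Eseq]

lemma Eseq_one {α : ℝ} (hα0 : 0 < α) (hα1 : α ≤ 1) : Eseq α 1 = 1 := by
  unfold Eseq
  rw [Nat.cast_one, mul_one]
  rw [Int.ceil_eq_iff]
  push_cast
  constructor <;> linarith

lemma tel (α : ℝ) (m : ℕ) : ∀ j : ℕ,
    ∑ k ∈ Finset.range j, chi α (m+k) = Eseq α (m+j) - Eseq α m := by
  intro j
  induction j with
  | zero => simp
  | succ j ih =>
    rw [Finset.sum_range_succ, ih]
    show _ = Eseq α ((m+j)+1) - Eseq α m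
    simp only [chi]
    ring

lemma Dub (α : ℝ) (n j : ℕ) : Eseq α (n+j) ≤ Eseq α n + Eseq α j := by
  unfold Eseq
  have h : α * ((n+j:ℕ):ℝ) = α * n + α * j := by push_cast; ring
  rw [h]
  exact Int.ceil_add_le _ _

lemma Dlb (α : ℝ) (n j : ℕ) : Eseq α n + Eseq α j ≤ Eseq α (n+j) + 1 := by
  unfold Eseq
  have h1 : (⌈α * (n:ℝ)⌉ : ℝ) < α * n + 1 := Int.ceil_lt_add_one _
  have h2 : (⌈α * (j:ℝ)⌉ : ℝ) < α * j + 1 := Int.ceil_lt_add_one _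
  have h3 : α * n + α * j ≤ (⌈α * ((n+j:ℕ):ℝ)⌉ : ℝ) := by
    have h : α * ((n+j:ℕ):ℝ) = α * n + α * j := by push_cast; ring
    rw [h] at *
    exact Int.le_ceil _
  have : (⌈α * (n:ℝ)⌉ : ℝ) + ⌈α * (j:ℝ)⌉ < (⌈α * ((n+j:ℕ):ℝ)⌉ : ℝ) + 2 := by linarith
  have hZ : ⌈α * (n:ℝ)⌉ + ⌈α * (j:ℝ)⌉ < ⌈α * ((n+j:ℕ):ℝ)⌉ + 2 := by exact_mod_cast this
  omega

lemma Dsplit_lt {α : ℝ} (hα : Irrational α) (n j : ℕ) (hn : n ≠ 0) (hj : j ≠ 0)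
    (h : Int.fract (α * n) + Int.fract (α * j) < 1) :
    Eseq α (n+j) = Eseq α n + Eseq α j - 1 := by
  unfold Eseq
  have he : α * ((n+j:ℕ):ℝ) = α * n + α * j := by push_cast; ring
  rw [he]
  exact ceil_add_of_fract_lt (irr_nat_mul hα hn) (irr_nat_mul hα hj)
    (he ▸ irr_nat_mul hα (by omega : n + j ≠ 0)) h

lemma Dsplit_gt {α : ℝ} (hα : Irrational α) (n j : ℕ) (hn : n ≠ 0) (hj : j ≠ 0)
    (h : 1 < Int.fract (α * n) + Int.fract (α * j)) :
    Eseq α (n+j) = Eseq α n + Eseq α j := by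
  unfold Eseq
  have he : α * ((n+j:ℕ):ℝ) = α * n + α * j := by push_cast; ring
  rw [he]
  exact ceil_add_of_one_lt_fract (irr_nat_mul hα hn) (irr_nat_mul hα hj)
    (he ▸ irr_nat_mul hα (by omega : n + j ≠ 0)) h

open Filter in
theorem stmt10 (β : ℝ) (hβ : 1 < β) (a b : ℤ) (ha : 0 ≤ a) (hab : a < b)
    (hb : b = ⌊β⌋) (α : ℝ) (hα : Irrational α) (hα0 : 0 < α) (hα1 : α < 1)
    (hS : ∀ n : ℕ, dB1 β n = a + (b - a) * (⌈α * (n + 1)⌉ - ⌈α * n⌉)) :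
    (¬ EventuallyPeriodic (dB1 β)) ∧
    (¬ MapClusterPt (0 : ℝ) Filter.atTop (fun n : ℕ => (Tb β)^[n] 1)) ∧
    Metric.diam {x : ℝ | ∃ n : ℕ, (Tb β)^[n] 1 = x} = ((b : ℝ) - (a : ℝ)) / β ∧
    (a = b - 1 ↔ ∀ n : ℕ, 1 - 1 / β ≤ (Tb β)^[n] 1 ∧ (Tb β)^[n] 1 ≤ 1) := by
  have hβ0 : (0:ℝ) < β := lt_trans one_pos hβ
  have hv0 : (0:ℝ) < β⁻¹ := inv_pos.mpr hβ0
  have hv1 : β⁻¹ < 1 := inv_lt_one_of_one_lt₀ hβ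
  have hbaZ : (0:ℤ) < b - a := by omega
  have hbaR : (0:ℝ) < (b:ℝ) - a := by exact_mod_cast hbaZ
  have hSχ : ∀ n : ℕ, dB1 β n = a + (b - a) * chi α n := by
    intro n
    rw [hS n]
    have hcast : ((n+1:ℕ):ℝ) = (n:ℝ) + 1 := by push_cast; ring
    simp only [chi, Eseq, hcast]
  -- difference identity
  have hdiff : ∀ n K : ℕ, (Tb β)^[n] 1 - 1
      = ((b:ℝ)-a) * (∑ k ∈ Finset.range K, ((chi α (n+k) - chi α k : ℤ):ℝ) * β⁻¹^(k+1))
        + ((Tb β)^[n+K] 1 - (Tb β)^[K] 1) * β⁻¹^K := by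
    intro n K
    have h1 := sum_id hβ0.ne' n K
    have h2 := sum_id hβ0.ne' 0 K
    simp only [zero_add] at h2
    have h0 : (1:ℝ) = (∑ k ∈ Finset.range K, (dB1 β k : ℝ) * β⁻¹^(k+1))
        + (Tb β)^[K] 1 * β⁻¹^K := by simpa using h2
    have h3 : ∀ k : ℕ, (dB1 β (n+k) : ℝ) - (dB1 β k)
        = ((b:ℝ)-a) * ((chi α (n+k) - chi α k : ℤ):ℝ) := by
      intro k
      rw [hSχ (n+k), hSχ k]
      push_cast
      ring
    have key : ((b:ℝ)-a) * (∑ k ∈ Finset.range K, ((chi α (n+k) - chi α k : ℤ):ℝ) * β⁻¹^(k+1))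
        = (∑ k ∈ Finset.range K, (dB1 β (n+k) : ℝ) * β⁻¹^(k+1))
          - (∑ k ∈ Finset.range K, (dB1 β k : ℝ) * β⁻¹^(k+1)) := by
      rw [Finset.mul_sum, ← Finset.sum_sub_distrib]
      apply Finset.sum_congr rfl
      intro k _
      rw [show (dB1 β (n+k) : ℝ) * β⁻¹^(k+1) - (dB1 β k : ℝ) * β⁻¹^(k+1)
          = ((dB1 β (n+k) : ℝ) - (dB1 β k)) * β⁻¹^(k+1) from by ring, h3 k]
      ring
    linear_combination h1 - h0 - key
  -- partial sums of chi differences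
  have hpsum : ∀ n j : ℕ, ∑ k ∈ Finset.range j, (chi α (n+k) - chi α k)
      = (Eseq α (n+j) - Eseq α n) - Eseq α j := by
    intro n j
    rw [Finset.sum_sub_distrib, tel α n j]
    have h2 : ∑ k ∈ Finset.range j, chi α k = Eseq α j - Eseq α 0 := by
      have := tel α 0 j
      simpa using this
    rw [h2, Eseq_zero]
    ring
  have hDrange : ∀ n j : ℕ, (-1 : ℤ) ≤ (Eseq α (n+j) - Eseq α n) - Eseq α j
      ∧ (Eseq α (n+j) - Eseq α n) - Eseq α j ≤ 0 := by
    intro n j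
    have h1 := Dub α n j
    have h2 := Dlb α n j
    omega
  -- the global lower bound  (finite version)
  have hbound : ∀ n K : ℕ, 1 - ((b:ℝ)-a) * β⁻¹ - β⁻¹^K ≤ (Tb β)^[n] 1 := by
    intro n K
    have hps : ∀ j, j ≤ K → (-1:ℝ) ≤ ∑ k ∈ Finset.range j, ((chi α (n+k) - chi α k : ℤ):ℝ)
        ∧ ∑ k ∈ Finset.range j, ((chi α (n+k) - chi α k : ℤ):ℝ) ≤ 0 := by
      intro j _
      have hcast : ∑ k ∈ Finset.range j, ((chi α (n+k) - chi α k : ℤ):ℝ)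
          = ((∑ k ∈ Finset.range j, (chi α (n+k) - chi α k) : ℤ) : ℝ) := by
        push_cast
        rfl
      rw [hcast, hpsum n j]
      constructor
      · exact_mod_cast (hDrange n j).1
      · exact_mod_cast (hDrange n j).2
    have hgb := geom_bound hv0.le hv1.le K (fun k => ((chi α (n+k) - chi α k : ℤ):ℝ)) (-1) 0 hps
    have hd := hdiff n K
    have hA := mul_le_mul_of_nonneg_left hgb.1 hbaR.le
    have hB : (-1:ℝ) * β⁻¹^K ≤ ((Tb β)^[n+K] 1 - (Tb β)^[K] 1) * β⁻¹^K := by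
      apply mul_le_mul_of_nonneg_right _ (pow_nonneg hv0.le K)
      have := xmem β (n+K)
      have := xmem β K
      linarith [(xmem β (n+K)).1, (xmem β K).2]
    nlinarith [hd, hA, hB]
  have hx1 : ∀ n, (Tb β)^[n] 1 ≤ 1 := fun n => (xmem β n).2
  -- limit version of the lower bound
  have hlow : ∀ n : ℕ, 1 - ((b:ℝ)-a) * β⁻¹ ≤ (Tb β)^[n] 1 := by
    intro n
    by_contra hlt
    push_neg at hlt
    have hε'0 : 0 < 1 - ((b:ℝ)-a) * β⁻¹ - (Tb β)^[n] 1 := by linarith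
    have ht := tendsto_pow_atTop_nhds_zero_of_lt_one hv0.le hv1
    obtain ⟨K, hK⟩ := (ht.eventually (gt_mem_nhds hε'0)).exists
    linarith [hbound n K]
  -- (b : ℝ) - a < β
  have hbltβ : (b:ℝ) - a < β := by
    have hble : (b:ℝ) ≤ β := by rw [hb]; exact Int.floor_le β
    have haR : (0:ℝ) ≤ a := by exact_mod_cast ha
    rcases lt_or_eq_of_le hble with h | h
    · linarith
    · exfalso
      -- then β is the integer b and the orbit dies, contradicting Sturmian digits
      have hx1' : (Tb β)^[1] 1 = 0 := by
        show Tb β 1 = 0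
        unfold Tb
        rw [mul_one, ← hb, ← h]
        simp
      have hxn : ∀ k, 1 ≤ k → (Tb β)^[k] 1 = 0 := by
        intro k hk
        induction k, hk using Nat.le_induction with
        | base => exact hx1'
        | succ k hk ih =>
          rw [Function.iterate_succ_apply', ih]
          unfold Tb
          simp
      have hε0 : ∀ k, 1 ≤ k → dB1 β k = 0 := by
        intro k hk
        unfold dB1
        rw [hxn k hk]
        simp
      have hχle : ∀ k, 1 ≤ k → chi α k ≤ 0 := by
        intro k hk
        have h1 := hSχ k
        rw [hε0 k hk] at h1
        nlinarith [h1]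
      obtain ⟨K, hKgt⟩ := exists_nat_gt (1/α)
      have hαK : 1 < α * K := by
        rw [div_lt_iff₀ hα0] at hKgt
        nlinarith
      have hEK : 1 < Eseq α K := by
        have : (1:ℤ) < ⌈α * (K:ℝ)⌉ := by
          rw [Int.lt_ceil]
          exact_mod_cast hαK
        exact this
      have hK1 : 1 ≤ K := by
        by_contra hc
        push_neg at hc
        interval_cases K
        · simp [Eseq] at hEK
      have htel := tel α 1 (K - 1)
      have hsum_le : ∑ k ∈ Finset.range (K-1), chi α (1+k) ≤ 0 :=
        Finset.sum_nonpos (fun k _ => hχle (1+k) (by omega))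
      rw [show 1 + (K-1) = K by omega] at htel
      rw [Eseq_one hα0 hα1.le] at htel
      omega
  have hc0 : 0 < 1 - ((b:ℝ)-a) * β⁻¹ := by
    have h1 : ((b:ℝ)-a) * β⁻¹ < 1 := by
      rw [← div_eq_mul_inv]
      exact (div_lt_one hβ0).mpr hbltβ
    linarith
  -- existence of orbit points close to the lower bound
  have hsmall : ∀ K : ℕ, 1 ≤ K →
      ∃ n : ℕ, (Tb β)^[n] 1 ≤ 1 - ((b:ℝ)-a) * β⁻¹ + β⁻¹^K := by
    intro K hK
    have hne : (Finset.Icc 1 K).Nonempty := ⟨1, by simp [hK]⟩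
    set θ : ℝ := (Finset.Icc 1 K).sup' hne (fun j => Int.fract (α * j)) with hθdef
    have hθ1 : θ < 1 := by
      rw [hθdef, Finset.sup'_lt_iff]
      exact fun j _ => Int.fract_lt_one _
    have hθ0 : 0 ≤ θ := by
      have := Finset.le_sup' (fun j : ℕ => Int.fract (α * j)) (Finset.mem_Icc.mpr ⟨le_refl 1, hK⟩)
      have h2 : 0 ≤ Int.fract (α * (1:ℕ)) := Int.fract_nonneg _
      linarith
    obtain ⟨n, hmn, hn1, hnl, hnu⟩ := dens hα (le_refl 0) (by linarith : (0:ℝ) < 1 - θ)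
      (by linarith) 1
    have hfr : ∀ j : ℕ, 1 ≤ j → j ≤ K → Int.fract (α * n) + Int.fract (α * j) < 1 := by
      intro j h1 h2
      have := Finset.le_sup' (fun j : ℕ => Int.fract (α * j)) (Finset.mem_Icc.mpr ⟨h1, h2⟩)
      linarith
    have hDj : ∀ j : ℕ, 1 ≤ j → j ≤ K → Eseq α (n+j) = Eseq α n + Eseq α j - 1 :=
      fun j h1 h2 => Dsplit_lt hα n j (by omega) (by omega) (hfr j h1 h2)
    have hχn : ∀ k : ℕ, 1 ≤ k → k + 1 ≤ K → chi α (n+k) = chi α k := by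
      intro k h1 h2
      have e1 := hDj k h1 (by omega)
      have e2 := hDj (k+1) (by omega) h2
      simp only [chi]
      rw [show n + k + 1 = n + (k+1) from rfl, e1, e2]
      ring
    have hχ0 : chi α (n+0) - chi α 0 = -1 := by
      have e1 := hDj 1 (le_refl 1) hK
      simp only [chi, Nat.add_zero]
      rw [show n + 1 = n + 1 from rfl] at e1
      rw [e1, Eseq_one hα0 hα1.le, Eseq_zero]
      ring
    have hsum : ∑ k ∈ Finset.range K, ((chi α (n+k) - chi α k : ℤ):ℝ) * β⁻¹^(k+1) = -β⁻¹ := by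
      rw [Finset.sum_eq_single 0]
      · rw [hχ0]
        push_cast
        ring
      · intro k hk hkne
        have hk1 : 1 ≤ k := by omega
        have hkK : k + 1 ≤ K := by
          have := Finset.mem_range.mp hk
          omega
        rw [hχn k hk1 hkK]
        simp
      · intro h0
        exact absurd (Finset.mem_range.mpr (by omega : 0 < K)) h0
    have hd := hdiff n K
    rw [hsum] at hd
    have hBle : ((Tb β)^[n+K] 1 - (Tb β)^[K] 1) * β⁻¹^K ≤ 1 * β⁻¹^K := by
      apply mul_le_mul_of_nonneg_right _ (pow_nonneg hv0.le K)
      linarith [(xmem β (n+K)).2, (xmem β K).1]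
    refine ⟨n, ?_⟩
    nlinarith [hd, hBle]
  -- Part (i) : not eventually periodic
  have part1 : ¬ EventuallyPeriodic (dB1 β) := by
    rintro ⟨m, p, hp, hper⟩
    have hχper : ∀ n, m ≤ n → chi α (n+p) = chi α n := by
      intro n hn
      have h1 := hper n hn
      rw [hSχ (n+p), hSχ n] at h1
      exact mul_left_cancel₀ (by omega : (b - a : ℤ) ≠ 0) (add_left_cancel h1)
    have hconst : ∀ N, m ≤ N → Eseq α (N+p) - Eseq α N = Eseq α (m+p) - Eseq α m := by
      intro N hN
      induction N, hN using Nat.le_induction with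
      | base => rfl
      | succ N hN ih =>
        have hcp := hχper N hN
        simp only [chi] at hcp
        have e1 : N+1+p = (N+p)+1 := by omega
        rw [e1]
        linarith [ih, hcp]
    have hfp : 0 < Int.fract (α * (p:ℕ)) := fract_pos_of_irr_s10 (irr_nat_mul hα (by omega))
    have hfp1 : Int.fract (α * (p:ℕ)) < 1 := Int.fract_lt_one _
    obtain ⟨N₁, hmN₁, hN₁1, hl₁, hu₁⟩ := dens hα (le_refl 0)
      (by linarith : (0:ℝ) < 1 - Int.fract (α * (p:ℕ))) (by linarith) m
    obtain ⟨N₂, hmN₂, hN₂1, hl₂, hu₂⟩ := dens hα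
      (by linarith : (0:ℝ) ≤ 1 - Int.fract (α * (p:ℕ)))
      (by linarith : 1 - Int.fract (α * (p:ℕ)) < 1) (le_refl 1) m
    have hval₁ : Eseq α (N₁+p) = Eseq α N₁ + Eseq α p - 1 :=
      Dsplit_lt hα N₁ p (by omega) (by omega) (by linarith)
    have hval₂ : Eseq α (N₂+p) = Eseq α N₂ + Eseq α p :=
      Dsplit_gt hα N₂ p (by omega) (by omega) (by linarith)
    have hc₁ := hconst N₁ hmN₁
    have hc₂ := hconst N₂ hmN₂
    rw [hval₁] at hc₁
    rw [hval₂] at hc₂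
    omega
  -- Part (ii) : 0 is not a cluster point of the orbit
  have part2 : ¬ MapClusterPt (0 : ℝ) Filter.atTop (fun n : ℕ => (Tb β)^[n] 1) := by
    intro h
    obtain ⟨n, hn⟩ := (mapClusterPt_iff_frequently.mp h (Set.Iio (1 - ((b:ℝ)-a) * β⁻¹))
      (Iio_mem_nhds hc0)).exists
    simp only [Set.mem_Iio] at hn
    linarith [hlow n]
  -- Part (iii) : diameter
  have part3 : Metric.diam {x : ℝ | ∃ n : ℕ, (Tb β)^[n] 1 = x} = ((b : ℝ) - (a : ℝ)) / β := by
    have hsubset : {x : ℝ | ∃ n : ℕ, (Tb β)^[n] 1 = x}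
        ⊆ Set.Icc (1 - ((b:ℝ)-a) * β⁻¹) 1 := by
      rintro y ⟨n, rfl⟩
      exact ⟨hlow n, hx1 n⟩
    have hbdd := (Metric.isBounded_Icc (1 - ((b:ℝ)-a) * β⁻¹) 1).subset hsubset
    have hIccle : 1 - ((b:ℝ)-a) * β⁻¹ ≤ 1 := by nlinarith
    have hub : Metric.diam {x : ℝ | ∃ n : ℕ, (Tb β)^[n] 1 = x} ≤ ((b : ℝ) - (a : ℝ)) / β := by
      have h1 := Metric.diam_mono hsubset (Metric.isBounded_Icc _ _)
      rw [Real.diam_Icc hIccle] at h1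
      calc Metric.diam {x : ℝ | ∃ n : ℕ, (Tb β)^[n] 1 = x}
          ≤ 1 - (1 - ((b:ℝ)-a) * β⁻¹) := h1
        _ = ((b : ℝ) - (a : ℝ)) / β := by rw [div_eq_mul_inv]; ring
    have hlb : ((b : ℝ) - (a : ℝ)) / β ≤ Metric.diam {x : ℝ | ∃ n : ℕ, (Tb β)^[n] 1 = x} := by
      apply le_of_forall_sub_le
      intro ε hε
      have ht := tendsto_pow_atTop_nhds_zero_of_lt_one hv0.le hv1
      obtain ⟨K, hKv, hK1⟩ := ((ht.eventually (gt_mem_nhds hε)).and (eventually_ge_atTop 1)).exists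
      obtain ⟨n, hn⟩ := hsmall K hK1
      have h1mem : (1:ℝ) ∈ {x : ℝ | ∃ n : ℕ, (Tb β)^[n] 1 = x} := ⟨0, rfl⟩
      have hnmem : (Tb β)^[n] 1 ∈ {x : ℝ | ∃ n : ℕ, (Tb β)^[n] 1 = x} := ⟨n, rfl⟩
      have hdle := Metric.dist_le_diam_of_mem hbdd h1mem hnmem
      rw [Real.dist_eq, abs_of_nonneg (by linarith [hx1 n])] at hdle
      have : ((b : ℝ) - (a : ℝ)) / β = ((b:ℝ)-a) * β⁻¹ := by rw [div_eq_mul_inv]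
      linarith
    exact le_antisymm hub hlb
  -- Part (iv)
  have part4 : a = b - 1 ↔ ∀ n : ℕ, 1 - 1 / β ≤ (Tb β)^[n] 1 ∧ (Tb β)^[n] 1 ≤ 1 := by
    constructor
    · intro haeq n
      have hba1 : ((b:ℝ) - a) = 1 := by
        have : b - a = 1 := by omega
        exact_mod_cast this
      refine ⟨?_, hx1 n⟩
      have := hlow n
      rw [hba1] at this
      rw [one_div]
      linarith
    · intro hall
      by_contra hne
      have hba2 : (2:ℤ) ≤ b - a := by omega
      have hba2R : (2:ℝ) ≤ (b:ℝ) - a := by exact_mod_cast hba2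
      obtain ⟨n, hn⟩ := hsmall 2 (by norm_num)
      have h1 := (hall n).1
      rw [one_div] at h1
      have hv2 : β⁻¹^2 < ((b:ℝ) - a - 1) * β⁻¹ := by nlinarith
      nlinarith [hn, h1]
  exact ⟨part1, part2, part3, part4⟩
end
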